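/- arXiv:1111.3410 — 7 statements merged into one kernel-verified Lean document; each statement's English description precedes it below -/
import Mathlib

section
/- Let 0 = r_0 < r_1 < ... < r_n be strictly increasing real numbers and define the Gelfond-Bernstein functions on [0,1] by H^n_{k}(t) = (-1)^{n-k} r_{k+1}···r_n [r_k,...,r_n]f_t for k = 0,...,n-1 and H^n_n(t) = t^{r_n}, where f_t(x) = t^x. Then for every t in [0,1], the sum over k from 0 to n of H^n_k(t) equals 1. -/
/-- The divided difference `[x 0, ..., x n] f`, defined recursively. -/
noncomputable def divDiff (f : ℝ → ℝ) : ℕ → (ℕ → ℝ) → ℝ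
  | 0, x => f (x 0)
  | n + 1, x =>
      (divDiff f n (fun i => x (i + 1)) - divDiff f n x) / (x (n + 1) - x 0)

/-- The Gelfond-Bernstein basis function `H^n_{k,Λ}` for `Λ = (r 0, ..., r n)`:
`H^n_k t = (-1)^(n-k) · r_{k+1}···r_n · [r_k,...,r_n] f_t` for `k < n`, and
`H^n_n t = t ^ r n`, where `f_t x = t ^ x` (real power). -/
noncomputable def GB (n : ℕ) (r : ℕ → ℝ) (k : ℕ) (t : ℝ) : ℝ :=
  if k = n then t ^ (r n)
  else (-1 : ℝ) ^ (n - k) * (∏ j ∈ Finset.Ioc k n, r j) *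
    divDiff (fun x => t ^ x) (n - k) (fun i => r (k + i))

/-!
With `f = f_t` and nodes `x = r`, the sum `∑ₖ H^n_k(t)` is the Newton form, with the nodes taken
in the order `r_n, …, r_0`, of the interpolating polynomial of `f_t` evaluated at the point
`a = r_0 = 0`: indeed `(-1)^{n-k} r_{k+1}⋯r_n = ∏_{j>k} (a - r_j)`. The Newton form at `a`
equals `f(a)` minus the remainder `∏_{j ≤ n} (a - x_j) · [a, x_0, …, x_n] f`, and the remainder
vanishes at the node `a = x_0`, leaving `f_t(0) = t^0 = 1`.
-/

open Finset

def seqCons {α : Type*} (a : α) (x : ℕ → α) : ℕ → α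
  | 0 => a
  | i + 1 => x i

@[simp] lemma seqCons_zero {α : Type*} (a : α) (x : ℕ → α) : seqCons a x 0 = a := rfl

lemma divDiff_seqCons_succ (f : ℝ → ℝ) (n : ℕ) (a : ℝ) (x : ℕ → ℝ) :
    divDiff f (n + 1) (seqCons a x)
      = (divDiff f n x - divDiff f n (seqCons a x)) / (x n - a) :=
  rfl

/-- The recursion of `divDiff`, with the nodes `a` and `x 0` in the roles of the first and the
last node. -/
lemma sub_mul_divDiff_seqCons (f : ℝ → ℝ) (a : ℝ) :
    ∀ {m : ℕ} {x : ℕ → ℝ}, Set.InjOn x (Set.Iic m) → (∀ j ≤ m, x j ≠ a) →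
      (x 0 - a) * divDiff f (m + 1) (seqCons a x)
        = divDiff f m x - divDiff f m (seqCons a fun i => x (i + 1))
  | 0, x, _, hxa => mul_div_cancel₀ _ (sub_ne_zero.mpr (hxa 0 le_rfl))
  | m + 1, x, hinj, hxa => by
      have hx0 : x 0 - a ≠ 0 := sub_ne_zero.mpr (hxa 0 (by omega))
      have hxm : x (m + 1) - a ≠ 0 := sub_ne_zero.mpr (hxa (m + 1) le_rfl)
      have hxm0 : x (m + 1) - x 0 ≠ 0 := sub_ne_zero.mpr fun h => by
        simpa using hinj (by simp) (by simp) h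
      have ih := sub_mul_divDiff_seqCons f a (hinj.mono (Set.Iic_subset_Iic.mpr m.le_succ))
        fun j hj => hxa j (by omega)
      have hcons : divDiff f (m + 1) (seqCons a x)
          = (divDiff f m x - divDiff f m (seqCons a fun i => x (i + 1))) / (x 0 - a) := by
        rw [eq_div_iff hx0, ← ih, mul_comm]
      rw [divDiff_seqCons_succ f (m + 1), hcons, divDiff, divDiff_seqCons_succ f m]
      field_simp
      ring

theorem sum_prod_sub_mul_divDiff (f : ℝ → ℝ) (a : ℝ) :
    ∀ {n : ℕ} {x : ℕ → ℝ}, Set.InjOn x (Set.Iic n) → (∀ j ∈ Ioc 0 n, x j ≠ a) →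
      ∑ k ∈ range (n + 1), (∏ j ∈ Ioc k n, (a - x j)) * divDiff f (n - k) (fun i => x (k + i))
        = f a - (∏ j ∈ range (n + 1), (a - x j)) * divDiff f (n + 1) (seqCons a x)
  | 0, x, _, _ => by
      have h : (a - x 0) * divDiff f 1 (seqCons a x) = f a - f (x 0) := by
        rcases eq_or_ne (x 0) a with hx0 | hx0
        · simp [hx0]
        · rw [divDiff_seqCons_succ, mul_div_assoc', div_eq_iff (sub_ne_zero.mpr hx0)]
          simp only [divDiff, seqCons_zero]
          ring
      simp [h]
      rfl
  | n + 1, x, hinj, hxa => by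
      have ih := sum_prod_sub_mul_divDiff f a (n := n) (x := fun i => x (i + 1))
        (hinj.comp (fun i _ j _ h => Nat.succ_injective h) fun i hi => by simpa using hi)
        fun j hj => hxa (j + 1) (by simp at hj ⊢; omega)
      have hshift : ∀ k ∈ range (n + 1),
          (∏ j ∈ Ioc (k + 1) (n + 1), (a - x j)) *
              divDiff f (n + 1 - (k + 1)) (fun i => x (k + 1 + i))
            = (∏ j ∈ Ioc k n, (a - x (j + 1))) *
              divDiff f (n - k) (fun i => x (k + i + 1)) := by
        intro k _
        rw [← map_add_right_Ioc, prod_map, Nat.add_sub_add_right]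
        simp only [addRightEmbedding_apply, Nat.add_right_comm]
      have hW : ∏ j ∈ Ioc 0 (n + 1), (a - x j) = ∏ j ∈ range (n + 1), (a - x (j + 1)) := by
        rw [range_eq_Ico, prod_Ico_add' (fun j => a - x j) 0 (n + 1) 1, Ico_add_one_add_one_eq_Ioc]
      rw [sum_range_succ', sum_congr rfl hshift, ih, prod_range_succ' (fun j => a - x j) (n + 1),
        hW, Nat.sub_zero]
      simp only [zero_add]
      rcases eq_or_ne (x 0) a with hx0 | hx0
      · have hcons : (seqCons a fun i => x (i + 1)) = x := by
          funext i
          cases i <;> simp [seqCons, hx0]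
        rw [hcons, hx0, sub_self]
        ring
      · have hswap := sub_mul_divDiff_seqCons f a hinj fun j hj => by
          rcases j with _ | j
          · exact hx0
          · exact hxa (j + 1) (by simp; omega)
        linear_combination (-∏ j ∈ range (n + 1), (a - x (j + 1))) * hswap

theorem sum_prod_sub_mul_divDiff_self (f : ℝ → ℝ) {n : ℕ} {x : ℕ → ℝ}
    (hx : Set.InjOn x (Set.Iic n)) :
    ∑ k ∈ range (n + 1), (∏ j ∈ Ioc k n, (x 0 - x j)) * divDiff f (n - k) (fun i => x (k + i))
      = f (x 0) := by
  have hx0 : ∀ j ∈ Ioc 0 n, x j ≠ x 0 := fun j hj =>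
    hx.ne (by simp at hj ⊢; omega) (by simp) (by simp at hj; omega)
  rw [sum_prod_sub_mul_divDiff f (x 0) hx hx0,
    prod_eq_zero (mem_range.mpr n.succ_pos) (sub_self _), zero_mul, sub_zero]

lemma GB_eq_prod_sub_mul_divDiff {n : ℕ} {r : ℕ → ℝ} (h0 : r 0 = 0) (k : ℕ) (t : ℝ) :
    GB n r k t
      = (∏ j ∈ Ioc k n, (r 0 - r j)) * divDiff (fun x => t ^ x) (n - k) (fun i => r (k + i)) := by
  unfold GB
  split_ifs with hk
  · simp [hk, divDiff]
  · simp only [h0, zero_sub, prod_neg, Nat.card_Ioc]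

theorem GB_sum_one (n : ℕ) (r : ℕ → ℝ) (h0 : r 0 = 0)
    (hr : ∀ i < n, r i < r (i + 1)) :
    ∀ t ∈ Set.Icc (0 : ℝ) 1, ∑ k ∈ Finset.range (n + 1), GB n r k t = 1 := by
  intro t _
  have hinj : Set.InjOn r (Set.Iic n) := (strictMonoOn_Iic_of_lt_succ hr).injOn
  calc ∑ k ∈ range (n + 1), GB n r k t
      = ∑ k ∈ range (n + 1), (∏ j ∈ Ioc k n, (r 0 - r j)) *
          divDiff (fun x => t ^ x) (n - k) (fun i => r (k + i)) :=
        sum_congr rfl fun k _ => GB_eq_prod_sub_mul_divDiff h0 k t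
    _ = t ^ r 0 := sum_prod_sub_mul_divDiff_self _ hinj
    _ = 1 := by rw [h0, Real.rpow_zero]
end

section
/- Let Λ_1 = (0=r_0, r_1, ..., r_n) and Λ_2 = (0=r_0, r_1, ..., r_n, r_{n+1}) be strictly increasing sequences of real numbers, and let H^n_{k,Λ_1} and H^{n+1}_{k,Λ_2} be the corresponding Gelfond-Bernstein bases. Then for each k = 0,...,n and all t in [0,1]: H^n_{k,Λ_1}(t) = ((r_{n+1} - r_k)/r_{n+1})·H^{n+1}_{k,Λ_2}(t) + (r_{k+1}/r_{n+1})·H^{n+1}_{k+1,Λ_2}(t). -/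
/-!
The recursion defining `[r_k, ..., r_{n+1}] f_t` splits it into `[r_{k+1}, ..., r_{n+1}] f_t`
and `[r_k, ..., r_n] f_t`, which are, up to sign and a product of the `r_j`, exactly
`H^{n+1}_{k+1}` and `H^n_k`. Substituting this into `H^{n+1}_k` leaves an identity between
rational expressions, whose denominators `r_{n+1}` and `r_{n+1} - r_k` are nonzero because
`0 = r_0 < r_k < r_{n+1}`.
-/

open Finset

theorem divDiff_succ_comp_add (f : ℝ → ℝ) (x : ℕ → ℝ) (k m : ℕ) :
    divDiff f (m + 1) (fun i => x (k + i)) =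
      (divDiff f m (fun i => x (k + 1 + i)) - divDiff f m (fun i => x (k + i))) /
        (x (k + m + 1) - x k) := by
  simp only [divDiff, add_assoc, add_zero, add_comm 1]

/-- At `k = n` the product is empty and the divided difference has order `0`. -/
theorem GB_eq_of_le {n k : ℕ} (r : ℕ → ℝ) (t : ℝ) (hk : k ≤ n) :
    GB n r k t = (-1 : ℝ) ^ (n - k) * (∏ j ∈ Ioc k n, r j) *
      divDiff (fun x => t ^ x) (n - k) (fun i => r (k + i)) := by
  unfold GB
  split_ifs with hkn
  · subst hkn
    simp [divDiff]
  · rfl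

theorem mul_prod_Ioc_add_one {M : Type*} [CommMonoid M] (f : ℕ → M) {a b : ℕ} (h : a < b) :
    f (a + 1) * ∏ j ∈ Ioc (a + 1) b, f j = ∏ j ∈ Ioc a b, f j := by
  rw [mul_prod_Ioc_eq_prod_Icc h, Icc_add_one_left_eq_Ioc]

theorem GB_iteration_general (n : ℕ) (r : ℕ → ℝ) (h0 : r 0 = 0)
    (hr : ∀ i ≤ n, r i < r (i + 1)) (k : ℕ) (hk : k ≤ n)
    (t : ℝ) :
    GB n r k t =
      ((r (n + 1) - r k) / r (n + 1)) * GB (n + 1) r k t +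
        (r (k + 1) / r (n + 1)) * GB (n + 1) r (k + 1) t := by
  have hmono : StrictMonoOn r (Set.Iic (n + 1)) :=
    strictMonoOn_Iic_of_lt_succ fun i hi => hr i (by omega)
  have hpos : 0 < r (n + 1) :=
    h0 ▸ hmono (by simp) (Set.mem_Iic.2 le_rfl) (Nat.succ_pos n)
  have hgap : r k < r (n + 1) :=
    hmono (Set.mem_Iic.2 (by omega)) (Set.mem_Iic.2 le_rfl) (by omega)
  have hprod : (∏ j ∈ Ioc k n, r j) * r (n + 1) = r (k + 1) * ∏ j ∈ Ioc (k + 1) (n + 1), r j := by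
    rw [mul_prod_Ioc_add_one r (by omega), prod_Ioc_succ_top hk]
  have hsplit := divDiff_succ_comp_add (fun x => t ^ x) r k (n - k)
  rw [show k + (n - k) + 1 = n + 1 by omega] at hsplit
  rw [GB_eq_of_le r t hk, GB_eq_of_le r t (by omega : k ≤ n + 1),
    GB_eq_of_le r t (by omega : k + 1 ≤ n + 1), Nat.sub_add_comm hk, Nat.add_sub_add_right,
    hsplit, prod_Ioc_succ_top hk, pow_succ]
  field_simp [hpos.ne', sub_ne_zero.2 hgap.ne']
  linear_combination divDiff (fun x => t ^ x) (n - k) (fun i => r (k + 1 + i)) * hprod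

/-- Lemma 1 of the paper: the dimension elevation identity
`H^n_{k,Λ₁} = ((r_{n+1}-r_k)/r_{n+1})·H^{n+1}_{k,Λ₂} + (r_{k+1}/r_{n+1})·H^{n+1}_{k+1,Λ₂}`. -/
theorem GB_iteration (n : ℕ) (r : ℕ → ℝ) (h0 : r 0 = 0)
    (hr : ∀ i ≤ n, r i < r (i + 1)) (k : ℕ) (hk : k ≤ n)
    (t : ℝ) (ht : t ∈ Set.Icc (0 : ℝ) 1) :
    GB n r k t =
      ((r (n + 1) - r k) / r (n + 1)) * GB (n + 1) r k t +
        (r (k + 1) / r (n + 1)) * GB (n + 1) r (k + 1) t :=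
  GB_iteration_general n r h0 hr k hk t
end

section
/- Let Λ = (0=r_0, r_1, ..., r_n) be a strictly increasing sequence of real numbers and let Λ_1 = (0, 1, r_1+1, r_2+1, ..., r_n+1). Then for k = 0,...,n and all t in [0,1]: t·H^n_{k,Λ}(t) = (∏_{j=k+1}^n r_j / ∏_{j=k+1}^n (r_j+1))·H^{n+1}_{k+1,Λ_1}(t), where empty products are 1. -/
/-!
Multiplying by `t` shifts every exponent up by one, `t · t ^ x = t ^ (x + 1)`, and divided
differences commute with multiplication by constants, so `t · [r_k, …, r_n] f_t` is the divided
difference at the shifted nodes `r_k + 1, …, r_n + 1`. Since `r_0 = 0`, the entries of `Λ₁` from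
index `1` on are exactly `r_j + 1`, so these are the nodes of `H^{n+1}_{k+1,Λ₁}`; only the
normalising products `∏ r_j` and `∏ (r_j + 1)` differ.
-/

open Finset

lemma divDiff_congr {f g : ℝ → ℝ} :
    ∀ (n : ℕ) (x : ℕ → ℝ), (∀ i ≤ n, f (x i) = g (x i)) → divDiff f n x = divDiff g n x
  | 0, x, h => h 0 le_rfl
  | n + 1, x, h => by
      simp only [divDiff]
      rw [divDiff_congr n (fun i => x (i + 1)) (fun i hi => h (i + 1) (by omega)),
        divDiff_congr n x (fun i hi => h i (by omega))]

lemma divDiff_const_mul (c : ℝ) (f : ℝ → ℝ) :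
    ∀ (n : ℕ) (x : ℕ → ℝ), divDiff (fun y => c * f y) n x = c * divDiff f n x
  | 0, x => rfl
  | n + 1, x => by
      simp only [divDiff, divDiff_const_mul c f n]
      ring

lemma divDiff_comp_add_const (c : ℝ) (f : ℝ → ℝ) :
    ∀ (n : ℕ) (x : ℕ → ℝ),
      divDiff (fun y => f (y + c)) n x = divDiff f n (fun i => x i + c)
  | 0, x => rfl
  | n + 1, x => by
      simp only [divDiff, divDiff_comp_add_const c f n]
      congr 1
      ring

-- Fails at `t = 0, x = -1`: `0 * 0 ^ (-1) = 0` but `0 ^ 0 = 1`.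
lemma mul_rpow_eq_rpow_add_one {t x : ℝ} (ht : 0 ≤ t) (hx : 0 ≤ x) :
    t * t ^ x = t ^ (x + 1) := by
  rw [Real.rpow_add_one' ht (by linarith), mul_comm]

lemma mul_divDiff_rpow {t : ℝ} (ht : 0 ≤ t) {n : ℕ} {x : ℕ → ℝ} (hx : ∀ i ≤ n, 0 ≤ x i) :
    t * divDiff (fun y => t ^ y) n x = divDiff (fun y => t ^ y) n (fun i => x i + 1) := by
  rw [← divDiff_comp_add_const, ← divDiff_const_mul]
  exact divDiff_congr n x fun i hi => mul_rpow_eq_rpow_add_one ht (hx i hi)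

lemma GB_succ_succ (n : ℕ) (r : ℕ → ℝ) (k : ℕ) (t : ℝ) :
    GB (n + 1) r (k + 1) t = GB n (fun i => r (i + 1)) k t := by
  unfold GB
  have hprod : ∏ j ∈ Ioc (k + 1) (n + 1), r j = ∏ j ∈ Ioc k n, r (j + 1) := by
    rw [← map_add_right_Ioc, prod_map]
    rfl
  simp only [add_left_inj, Nat.add_sub_add_right, hprod, add_right_comm k]

lemma mul_GB {t : ℝ} (ht : 0 ≤ t) {n : ℕ} {r : ℕ → ℝ} (hr : ∀ i ≤ n, 0 ≤ r i) {k : ℕ}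
    (hk : k ≤ n) :
    t * GB n r k t =
      ((∏ j ∈ Ioc k n, r j) / (∏ j ∈ Ioc k n, (r j + 1))) * GB n (fun i => r i + 1) k t := by
  have hpos : 0 < ∏ j ∈ Ioc k n, (r j + 1) :=
    prod_pos fun j hj => by linarith [hr j (mem_Ioc.mp hj).2]
  unfold GB
  split_ifs with hkn
  · subst hkn
    simp only [Ioc_self, prod_empty, div_one, one_mul]
    exact mul_rpow_eq_rpow_add_one ht (hr k le_rfl)
  · rw [← mul_divDiff_rpow ht fun i hi => hr (k + i) (by omega)]
    field_simp

lemma nonneg_of_eq_zero_of_lt_succ {n : ℕ} {r : ℕ → ℝ} (h0 : r 0 = 0)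
    (hr : ∀ i < n, r i < r (i + 1)) : ∀ i ≤ n, 0 ≤ r i := fun i hi =>
  h0 ▸ (strictMonoOn_Iic_of_lt_succ (ψ := r) (n := n) hr).monotoneOn
    (Set.mem_Iic.mpr (Nat.zero_le n)) (Set.mem_Iic.mpr hi) (Nat.zero_le i)

/-- Lemma: `t·H^n_{k,Λ} = (∏_{j=k+1}^n r_j / ∏_{j=k+1}^n (r_j+1)) · H^{n+1}_{k+1,Λ₁}`
with `Λ₁ = (0, 1, r_1+1, ..., r_n+1)`. -/
theorem GB_mul_t (n : ℕ) (r : ℕ → ℝ) (h0 : r 0 = 0)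
    (hr : ∀ i < n, r i < r (i + 1)) (k : ℕ) (hk : k ≤ n)
    (t : ℝ) (ht : t ∈ Set.Icc (0 : ℝ) 1) :
    t * GB n r k t =
      ((∏ j ∈ Finset.Ioc k n, r j) / (∏ j ∈ Finset.Ioc k n, (r j + 1))) *
        GB (n + 1) (fun i => if i = 0 then 0 else if i = 1 then 1 else r (i - 1) + 1)
          (k + 1) t := by
  have hnodes : (fun i => (fun i => if i = 0 then 0 else if i = 1 then 1 else r (i - 1) + 1)
      (i + 1)) = fun i => r i + 1 := by
    funext i
    rcases i with _ | i
    · simp [h0]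
    · simp
  rw [GB_succ_succ, hnodes]
  exact mul_GB ht.1 (nonneg_of_eq_zero_of_lt_succ h0 hr) hk
end

section
/- Let γ > 0 and let (a_j), (b_j), j ≥ 1, be sequences in the open interval (0,1) such that lim_{j→∞} (ln b_j)/(ln a_j) = γ. Define A_i(m) = ∏_{j=i+1}^m a_j and B_i(m) = ∏_{j=i+1}^m b_j for i < m, and assume for every fixed i that A_i(m) → 0 and B_i(m) → 0 as m → ∞. Then A_i(m)^γ - B_i(m) → 0 as m → ∞, uniformly in i; that is, for every ε > 0 there exists M such that for all m ≥ M and all i with 1 ≤ i < m, |A_i(m)^γ - B_i(m)| < ε. -/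
/-!
Past some index `N` the ratios `log b_j / log a_j` are within `c γ` of `γ`. For `i ≥ N`, writing
`A_i(m) ^ γ = exp (-t)`, the logarithm of `B_i(m)` is then within `c t` of `-t`, and the mean value
theorem bounds `|A_i(m) ^ γ - B_i(m)|` by `c t exp (-t / 2) ≤ 2 c`, whatever the size of `t`.
The finitely many `i < N` are handled by the pointwise convergence `A_i(m), B_i(m) → 0`.
-/

open Filter Real

theorem abs_exp_sub_exp_le_exp_max_mul (u v : ℝ) :
    |exp u - exp v| ≤ exp (max u v) * |u - v| := by
  wlog hvu : v ≤ u generalizing u v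
  · rw [abs_sub_comm, max_comm, abs_sub_comm u]
    exact this v u (le_of_not_ge hvu)
  have hexp : exp u - exp v = exp u * (1 - exp (v - u)) := by
    rw [mul_one_sub, ← exp_add, add_sub_cancel]
  rw [max_eq_left hvu, abs_of_nonneg (sub_nonneg.2 hvu),
    abs_of_nonneg (sub_nonneg.2 (exp_le_exp.2 hvu)), hexp]
  exact mul_le_mul_of_nonneg_left (by linarith [add_one_le_exp (v - u)]) (exp_pos u).le

theorem mul_exp_neg_half_le_two (t : ℝ) : t * exp (-(t / 2)) ≤ 2 := by
  rw [exp_neg, ← div_eq_mul_inv, div_le_iff₀ (exp_pos _)]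
  linarith [add_one_le_exp (t / 2), exp_pos (t / 2)]

theorem abs_exp_neg_sub_exp_le {t v c : ℝ} (ht : 0 ≤ t) (hc₀ : 0 ≤ c) (hc : c ≤ 1 / 2)
    (h : |v + t| ≤ c * t) : |exp (-t) - exp v| ≤ 2 * c := by
  have hmax : max (-t) v ≤ -(t / 2) := by
    refine max_le (by linarith) ?_
    nlinarith [le_of_abs_le h]
  calc |exp (-t) - exp v| ≤ exp (max (-t) v) * |-t - v| := abs_exp_sub_exp_le_exp_max_mul _ _
    _ ≤ exp (-(t / 2)) * (c * t) := by
      rw [abs_sub_comm, sub_neg_eq_add]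
      gcongr
    _ = c * (t * exp (-(t / 2))) := by ring
    _ ≤ c * 2 := by gcongr; exact mul_exp_neg_half_le_two t
    _ = 2 * c := mul_comm _ _

theorem abs_rpow_sub_le_of_abs_log_sub_le {x y γ c : ℝ} (hx₀ : 0 < x) (hx₁ : x ≤ 1) (hy : 0 < y)
    (hγ : 0 < γ) (hc₀ : 0 ≤ c) (hc : c ≤ 1 / 2) (h : |log y - γ * log x| ≤ c * γ * -log x) :
    |x ^ γ - y| ≤ 2 * c := by
  have ht : 0 ≤ γ * -log x := mul_nonneg hγ.le (neg_nonneg.2 (log_nonpos hx₀.le hx₁))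
  rw [rpow_def_of_pos hx₀, ← exp_log hy, mul_comm, ← neg_neg (γ * log x), ← mul_neg]
  refine abs_exp_neg_sub_exp_le ht hc₀ hc ?_
  convert h using 1 <;> ring_nf

theorem abs_log_prod_sub_le {ι : Type*} {s : Finset ι} {a b : ι → ℝ} {γ δ : ℝ}
    (ha : ∀ j ∈ s, a j ∈ Set.Ioo (0 : ℝ) 1) (hb : ∀ j ∈ s, 0 < b j)
    (hδ : ∀ j ∈ s, |log (b j) / log (a j) - γ| ≤ δ) :
    |log (∏ j ∈ s, b j) - γ * log (∏ j ∈ s, a j)| ≤ δ * -log (∏ j ∈ s, a j) := by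
  rw [log_prod fun j hj => (hb j hj).ne', log_prod fun j hj => (ha j hj).1.ne', Finset.mul_sum,
    ← Finset.sum_sub_distrib, ← Finset.sum_neg_distrib, Finset.mul_sum]
  refine (Finset.abs_sum_le_sum_abs _ _).trans (Finset.sum_le_sum fun j hj => ?_)
  have hlog : log (a j) < 0 := log_neg (ha j hj).1 (ha j hj).2
  calc |log (b j) - γ * log (a j)| = |log (b j) / log (a j) - γ| * -log (a j) := by
        rw [← abs_of_neg hlog, ← abs_mul, sub_mul, div_mul_cancel₀ _ hlog.ne, mul_comm]
    _ ≤ δ * -log (a j) := mul_le_mul_of_nonneg_right (hδ j hj) (by linarith)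
    _ = _ := by ring

theorem abs_prod_rpow_sub_prod_le {ι : Type*} {s : Finset ι} {a b : ι → ℝ} {γ c : ℝ}
    (hγ : 0 < γ) (hc₀ : 0 ≤ c) (hc : c ≤ 1 / 2)
    (ha : ∀ j ∈ s, a j ∈ Set.Ioo (0 : ℝ) 1) (hb : ∀ j ∈ s, 0 < b j)
    (hratio : ∀ j ∈ s, |log (b j) / log (a j) - γ| ≤ c * γ) :
    |(∏ j ∈ s, a j) ^ γ - ∏ j ∈ s, b j| ≤ 2 * c :=
  abs_rpow_sub_le_of_abs_log_sub_le (Finset.prod_pos fun j hj => (ha j hj).1)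
    (Finset.prod_le_one (fun j hj => (ha j hj).1.le) fun j hj => (ha j hj).2.le)
    (Finset.prod_pos hb) hγ hc₀ hc (abs_log_prod_sub_le ha hb hratio)

theorem uniform_product_comparison (γ : ℝ) (hγ : 0 < γ) (a b : ℕ → ℝ)
    (ha : ∀ j, 1 ≤ j → a j ∈ Set.Ioo (0 : ℝ) 1)
    (hb : ∀ j, 1 ≤ j → b j ∈ Set.Ioo (0 : ℝ) 1)
    (hlim : Tendsto (fun j => Real.log (b j) / Real.log (a j)) atTop (nhds γ))
    (hA : ∀ i : ℕ, Tendsto (fun m => ∏ j ∈ Finset.Ioc i m, a j) atTop (nhds 0))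
    (hB : ∀ i : ℕ, Tendsto (fun m => ∏ j ∈ Finset.Ioc i m, b j) atTop (nhds 0)) :
    ∀ ε > 0, ∃ M : ℕ, ∀ m ≥ M, ∀ i, 1 ≤ i → i < m →
      |(∏ j ∈ Finset.Ioc i m, a j) ^ γ - ∏ j ∈ Finset.Ioc i m, b j| < ε := by
  intro ε hε
  set c := min (1 / 2) (ε / 4)
  have hc₀ : 0 ≤ c := le_min (by norm_num) (by positivity)
  obtain ⟨N, hN⟩ := Metric.tendsto_atTop.1 hlim (c * γ) (by positivity)
  have hhead : ∀ᶠ m in atTop, ∀ i ∈ Finset.range N,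
      |(∏ j ∈ Finset.Ioc i m, a j) ^ γ - ∏ j ∈ Finset.Ioc i m, b j| < ε := by
    refine eventually_all_finset _ |>.2 fun i _ => ?_
    have hlim_i := ((hA i).rpow_const (Or.inr hγ.le)).sub (hB i)
    rw [zero_rpow hγ.ne', sub_zero] at hlim_i
    simpa only [Real.dist_0_eq_abs] using Metric.tendsto_nhds.1 hlim_i ε hε
  obtain ⟨M, hM⟩ := eventually_atTop.1 hhead
  refine ⟨M, fun m hm i _ _ => ?_⟩
  rcases lt_or_ge i N with hiN | hiN
  · exact hM m hm i (Finset.mem_range.2 hiN)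
  have hpos : ∀ j ∈ Finset.Ioc i m, 1 ≤ j := fun j hj => Nat.one_le_of_lt (Finset.mem_Ioc.1 hj).1
  calc _ ≤ 2 * c := abs_prod_rpow_sub_prod_le hγ hc₀ (min_le_left _ _)
        (fun j hj => ha j (hpos j hj)) (fun j hj => (hb j (hpos j hj)).1)
        fun j hj => (hN j (hiN.trans (Finset.mem_Ioc.1 hj).1.le)).le
    _ ≤ 2 * (ε / 4) := by gcongr; exact min_le_right _ _
    _ < ε := by linarith
end

section
/- Let 0 = r_0 < r_1 < r_2 < ... be a strictly increasing sequence of positive reals with r_s → ∞ and ∑_{i≥1} 1/r_i = ∞. For each m, define η_i(Λ_m) = ∏_{j=i+1}^m (1 - r_1/r_j) for 1 ≤ i ≤ m-1, η_0(Λ_m) = 0, η_m(Λ_m) = 1. Then the point sets D_m = {η_i(Λ_m)^{1/r_1} : i = 0,...,m} become dense in [0,1] as m → ∞: for every x_0 in [0,1] and ε > 0, there exists m_0 such that for all m ≥ m_0 there is an index i ≤ m with |x_0 - η_i(Λ_m)^{1/r_1}| < ε. -/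
open Filter

/-- `η_i(Λ_m) = ∏_{j=i+1}^m (1 - r_1/r_j)` for `1 ≤ i ≤ m-1`, with `η_0 = 0`
and `η_m = 1` (the empty product). -/
noncomputable def eta (r : ℕ → ℝ) (m i : ℕ) : ℝ :=
  if i = 0 then 0 else ∏ j ∈ Finset.Ioc i m, (1 - r 1 / r j)

/-!
Write `xᵢ = ηᵢ(Λ_m)^{1/r₁}`. Then `x_m = 1` and `xᵢ = (1 - r₁/r_{i+1})^{1/r₁} x_{i+1}`, so for
`i ≥ N` consecutive points differ by at most `1 - (1 - r₁/r_{i+1})^{1/r₁}`, which is small once `N`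
is large because `r_j → ∞`. For fixed `N`, `η_N(Λ_m) ≤ exp (-r₁ ∑_{N<j≤m} 1/r_j) → 0` as `m → ∞`
because `∑ 1/r_j` diverges. Hence for large `m` the points `x_N, …, x_m` climb from near `0` to `1`
in small steps, and every point of `[0, 1]` is close to one of them.
-/

open Finset Topology

theorem exists_abs_sub_lt_of_forall_succ_lt {f : ℕ → ℝ} {N m : ℕ} {x δ : ℝ} (hNm : N ≤ m)
    (hstep : ∀ k, N ≤ k → k < m → f (k + 1) < f k + δ) (hN : f N < x + δ) (hm : x < f m + δ) :
    ∃ i, N ≤ i ∧ i ≤ m ∧ |x - f i| < δ := by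
  induction m, hNm using Nat.le_induction with
  | base => exact ⟨N, le_rfl, le_rfl, abs_sub_lt_iff.mpr ⟨by linarith, by linarith⟩⟩
  | succ m hNm ih =>
    by_cases hxm : x < f m + δ
    · obtain ⟨i, hNi, him, hi⟩ := ih (fun k hNk hkm => hstep k hNk (by omega)) hxm
      exact ⟨i, hNi, by omega, hi⟩
    · have := hstep m hNm (by omega)
      exact ⟨m + 1, by omega, le_rfl, abs_sub_lt_iff.mpr ⟨by linarith, by linarith⟩⟩

theorem tendsto_prod_one_sub_atTop_zero {a : ℕ → ℝ} {N : ℕ} (ha : ∀ j, N < j → a j ≤ 1)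
    (hsum : Tendsto (fun m => ∑ j ∈ Ioc N m, a j) atTop atTop) :
    Tendsto (fun m => ∏ j ∈ Ioc N m, (1 - a j)) atTop (𝓝 0) := by
  refine squeeze_zero (fun m => prod_nonneg fun j hj => ?_) (fun m => ?_)
    (Real.tendsto_exp_atBot.comp (tendsto_neg_atTop_atBot.comp hsum))
  · exact sub_nonneg.mpr (ha j (mem_Ioc.mp hj).1)
  · calc ∏ j ∈ Ioc N m, (1 - a j)
        ≤ ∏ j ∈ Ioc N m, Real.exp (-a j) :=
          prod_le_prod (fun j hj => sub_nonneg.mpr (ha j (mem_Ioc.mp hj).1))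
            fun j _ => Real.one_sub_le_exp_neg _
      _ = Real.exp (-∑ j ∈ Ioc N m, a j) := by rw [← sum_neg_distrib, Real.exp_sum]

theorem tendsto_sum_Ioc_atTop {a : ℕ → ℝ} (N : ℕ)
    (h : Tendsto (fun m => ∑ j ∈ Icc 1 m, a j) atTop atTop) :
    Tendsto (fun m => ∑ j ∈ Ioc N m, a j) atTop atTop := by
  refine (tendsto_atTop_add_const_right _ (-∑ j ∈ Ioc 0 N, a j) h).congr' ?_
  filter_upwards [eventually_ge_atTop N] with m hm
  rw [show Icc 1 m = Ioc 0 m from Icc_add_one_left_eq_Ioc 0 m,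
    ← sum_Ioc_consecutive a N.zero_le hm]
  ring

section Eta

variable {r : ℕ → ℝ}

theorem eta_self {m : ℕ} (hm : m ≠ 0) : eta r m m = 1 := by
  simp [eta, hm]

theorem eta_eq_mul_eta_succ {m i : ℕ} (hi : i ≠ 0) (him : i < m) :
    eta r m i = (1 - r 1 / r (i + 1)) * eta r m (i + 1) := by
  rw [eta, eta, if_neg hi, if_neg i.succ_ne_zero, ← insert_Ioc_add_one_left_eq_Ioc him,
    prod_insert (by simp)]

theorem one_sub_div_mem_Ioo (hr : StrictMono r) (hr1 : 0 < r 1) {j : ℕ} (hj : 2 ≤ j) :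
    1 - r 1 / r j ∈ Set.Ioo 0 1 := by
  have hrj : 0 < r j := hr1.trans (hr (by omega))
  constructor
  · simpa using (div_lt_one hrj).mpr (hr (by omega : 1 < j))
  · simpa using div_pos hr1 hrj

theorem eta_mem_Ioc (hr : StrictMono r) (hr1 : 0 < r 1) {m i : ℕ} (hi : i ≠ 0) :
    eta r m i ∈ Set.Ioc 0 1 := by
  have hfac : ∀ j ∈ Ioc i m, 1 - r 1 / r j ∈ Set.Ioo 0 1 := fun j hj =>
    one_sub_div_mem_Ioo hr hr1 (by have := (mem_Ioc.mp hj).1; omega)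
  rw [eta, if_neg hi]
  exact ⟨prod_pos fun j hj => (hfac j hj).1,
    prod_le_one (fun j hj => (hfac j hj).1.le) fun j hj => (hfac j hj).2.le⟩

theorem tendsto_eta_atTop_zero (hr : StrictMono r) (hr1 : 0 < r 1)
    (hdiv : Tendsto (fun m => ∑ j ∈ Icc 1 m, 1 / r j) atTop atTop) {N : ℕ} (hN : N ≠ 0) :
    Tendsto (fun m => eta r m N) atTop (𝓝 0) := by
  have hsum : Tendsto (fun m => ∑ j ∈ Ioc N m, r 1 / r j) atTop atTop := by
    simpa only [mul_sum, mul_one_div] using (tendsto_sum_Ioc_atTop N hdiv).const_mul_atTop hr1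
  have hle : ∀ j, N < j → r 1 / r j ≤ 1 := fun j hj => by
    linarith [(one_sub_div_mem_Ioo hr hr1 (by omega : 2 ≤ j)).1]
  simpa only [eta, if_neg hN] using tendsto_prod_one_sub_atTop_zero hle hsum

theorem tendsto_rpow_eta_atTop_zero (hr : StrictMono r) (hr1 : 0 < r 1)
    (hdiv : Tendsto (fun m => ∑ j ∈ Icc 1 m, 1 / r j) atTop atTop) {N : ℕ} (hN : N ≠ 0)
    {p : ℝ} (hp : 0 < p) : Tendsto (fun m => eta r m N ^ p) atTop (𝓝 0) := by
  simpa [Real.zero_rpow hp.ne'] using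
    (tendsto_eta_atTop_zero hr hr1 hdiv hN).rpow_const (Or.inr hp.le)

theorem rpow_eta_succ_le (hr : StrictMono r) (hr1 : 0 < r 1) {m k : ℕ} (hk : k ≠ 0) (hkm : k < m)
    {p : ℝ} (hp : 0 ≤ p) :
    eta r m (k + 1) ^ p ≤ eta r m k ^ p + (1 - (1 - r 1 / r (k + 1)) ^ p) := by
  obtain ⟨hc0, hc1⟩ := one_sub_div_mem_Ioo hr hr1 (by omega : 2 ≤ k + 1)
  obtain ⟨hη0, hη1⟩ := eta_mem_Ioc hr hr1 (m := m) k.succ_ne_zero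
  have hcp : (1 - r 1 / r (k + 1)) ^ p ≤ 1 := Real.rpow_le_one hc0.le hc1.le hp
  have hηp : eta r m (k + 1) ^ p ≤ 1 := Real.rpow_le_one hη0.le hη1 hp
  rw [eta_eq_mul_eta_succ hk hkm, Real.mul_rpow hc0.le hη0.le]
  nlinarith

theorem tendsto_one_sub_rpow_one_sub_div_atTop (hinf : Tendsto r atTop atTop) (p : ℝ) :
    Tendsto (fun j => 1 - (1 - r 1 / r j) ^ p) atTop (𝓝 0) := by
  have h : Tendsto (fun j => 1 - r 1 / r j) atTop (𝓝 1) := by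
    simpa using tendsto_const_nhds.sub (tendsto_const_nhds.div_atTop hinf)
  simpa using (tendsto_const_nhds (x := (1 : ℝ))).sub (h.rpow_const (Or.inl one_ne_zero))

end Eta

theorem eta_dense (r : ℕ → ℝ) (h0 : r 0 = 0) (hmono : StrictMono r)
    (hinf : Tendsto r atTop atTop)
    (hdiv : Tendsto (fun m => ∑ j ∈ Finset.Icc 1 m, 1 / r j) atTop atTop) :
    ∀ x₀ ∈ Set.Icc (0 : ℝ) 1, ∀ ε > 0, ∃ m₀ : ℕ, ∀ m ≥ m₀, ∃ i ≤ m,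
      |x₀ - (eta r m i) ^ (1 / r 1)| < ε := by
  intro x₀ hx₀ ε hε
  have hr1 : 0 < r 1 := h0 ▸ hmono zero_lt_one
  have hp : 0 < 1 / r 1 := one_div_pos.mpr hr1
  obtain ⟨N, hgap⟩ := eventually_atTop.mp
    ((tendsto_one_sub_rpow_one_sub_div_atTop hinf (1 / r 1)).eventually (gt_mem_nhds hε))
  obtain ⟨m₁, hsmall⟩ := eventually_atTop.mp
    ((tendsto_rpow_eta_atTop_zero hmono hr1 hdiv N.succ_ne_zero hp).eventually (gt_mem_nhds hε))
  refine ⟨max m₁ (N + 1), fun m hm => ?_⟩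
  obtain ⟨i, -, him, hi⟩ := exists_abs_sub_lt_of_forall_succ_lt (x := x₀) (δ := ε)
    (f := fun i => eta r m i ^ (1 / r 1)) (le_of_max_le_right hm)
    (fun k hk hkm => (rpow_eta_succ_le hmono hr1 (by omega) hkm hp.le).trans_lt
      (by linarith [hgap (k + 1) (by omega)]))
    (by linarith [hsmall m (le_of_max_le_left hm), hx₀.1])
    (by rw [eta_self (by omega), Real.one_rpow]; linarith [hx₀.2])
  exact ⟨i, him, hi⟩
end

section
/- Let L^m_i(x) = ∑ nonnegative basis functions with ∑_{i=0}^m L^m_i(x) = 1 on [0,1], and let ξ_0 < ξ_1 < ... < ξ_m be nodes in [0,1]. Suppose that for every continuous f on [0,1], the operator B_m(f)(x) = ∑_{i=0}^m f(ξ_i) L^m_i(x) converges uniformly to f. Then the node sets {ξ_i : i = 0,...,m} become dense in [0,1] as m → ∞: for every x_0 ∈ [0,1] and ε > 0, there is m_0 such that for all m ≥ m_0 some node ξ_i satisfies |x_0 - ξ_i| < ε. -/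
open Filter Finset Topology

/-
The function |x - x₀| is continuous and vanishes only at x₀, so B_m(|· - x₀|)(x₀) → 0. This value
is an average of the distances |ξ_i - x₀| with the weights L^m_i(x₀), which are nonnegative and
sum to 1, so once it drops below ε one of those distances is below ε.
-/

theorem Finset.exists_lt_of_sum_mul_lt {ι R : Type*} [Semiring R] [LinearOrder R]
    [IsStrictOrderedRing R] {s : Finset ι} {f w : ι → R} {c : R}
    (hw : ∀ i ∈ s, 0 ≤ w i) (hw_sum : ∑ i ∈ s, w i = 1) (hlt : ∑ i ∈ s, f i * w i < c) :
    ∃ i ∈ s, f i < c := by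
  have : ∑ i ∈ s, f i * w i < ∑ i ∈ s, c * w i := by rwa [← mul_sum, hw_sum, mul_one]
  obtain ⟨i, hi, hi_lt⟩ := exists_lt_of_sum_lt this
  exact ⟨i, hi, lt_of_mul_lt_mul_right hi_lt (hw i hi)⟩

theorem eventually_exists_node_near (L : ℕ → ℕ → ℝ → ℝ) (ξ : ℕ → ℕ → ℝ) (x₀ : ℝ)
    (hLpos : ∀ m, ∀ i ≤ m, 0 ≤ L m i x₀)
    (hLsum : ∀ m, ∑ i ∈ range (m + 1), L m i x₀ = 1)
    (hlim : Tendsto (fun m => ∑ i ∈ range (m + 1), |ξ m i - x₀| * L m i x₀) atTop (𝓝 0))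
    {ε : ℝ} (hε : 0 < ε) :
    ∀ᶠ m in atTop, ∃ i ≤ m, |x₀ - ξ m i| < ε := by
  filter_upwards [hlim.eventually_lt_const hε] with m hm
  obtain ⟨i, hi, hi_lt⟩ := exists_lt_of_sum_mul_lt
    (fun i hi => hLpos m i (Nat.lt_succ_iff.mp (mem_range.mp hi))) (hLsum m) hm
  exact ⟨i, Nat.lt_succ_iff.mp (mem_range.mp hi), by rwa [abs_sub_comm]⟩

theorem nodes_dense_general (L : ℕ → ℕ → ℝ → ℝ) (ξ : ℕ → ℕ → ℝ)
    (hLpos : ∀ m, ∀ i ≤ m, ∀ x ∈ Set.Icc (0 : ℝ) 1, 0 ≤ L m i x)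
    (hLsum : ∀ m, ∀ x ∈ Set.Icc (0 : ℝ) 1, ∑ i ∈ Finset.range (m + 1), L m i x = 1)
    (happrox : ∀ f : ℝ → ℝ, ContinuousOn f (Set.Icc 0 1) →
      TendstoUniformlyOn
        (fun m x => ∑ i ∈ Finset.range (m + 1), f (ξ m i) * L m i x) f atTop
        (Set.Icc 0 1)) :
    ∀ x₀ ∈ Set.Icc (0 : ℝ) 1, ∀ ε > 0, ∃ m₀ : ℕ, ∀ m ≥ m₀, ∃ i ≤ m,
      |x₀ - ξ m i| < ε := by
  intro x₀ hx₀ ε hε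
  have hdist_cont : ContinuousOn (fun x => |x - x₀|) (Set.Icc 0 1) := by fun_prop
  have hlim := (happrox _ hdist_cont).tendsto_at hx₀
  rw [sub_self, abs_zero] at hlim
  exact eventually_atTop.mp <| eventually_exists_node_near L ξ x₀
    (fun m i hi => hLpos m i hi x₀ hx₀) (fun m => hLsum m x₀ hx₀) hlim hε

theorem nodes_dense (L : ℕ → ℕ → ℝ → ℝ) (ξ : ℕ → ℕ → ℝ)
    (hLpos : ∀ m, ∀ i ≤ m, ∀ x ∈ Set.Icc (0 : ℝ) 1, 0 ≤ L m i x)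
    (hLsum : ∀ m, ∀ x ∈ Set.Icc (0 : ℝ) 1, ∑ i ∈ Finset.range (m + 1), L m i x = 1)
    (hξmem : ∀ m, ∀ i ≤ m, ξ m i ∈ Set.Icc (0 : ℝ) 1)
    (hξmono : ∀ m, ∀ i j : ℕ, i < j → j ≤ m → ξ m i < ξ m j)
    (happrox : ∀ f : ℝ → ℝ, ContinuousOn f (Set.Icc 0 1) →
      TendstoUniformlyOn
        (fun m x => ∑ i ∈ Finset.range (m + 1), f (ξ m i) * L m i x) f atTop
        (Set.Icc 0 1)) :
    ∀ x₀ ∈ Set.Icc (0 : ℝ) 1, ∀ ε > 0, ∃ m₀ : ℕ, ∀ m ≥ m₀, ∃ i ≤ m,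
      |x₀ - ξ m i| < ε :=
  nodes_dense_general L ξ hLpos hLsum happrox
end

section
/- Let P be a polynomial of degree at most n, and for m ≥ n write P(t) = ∑_{i=0}^m b_i^m B_i^m(t) in the Bernstein basis of degree m on [0,1]. Then max_{0≤i≤m} |b_i^m - P(i/m)| = O(1/m) as m → ∞; i.e., there is a constant C depending only on P such that max_i |b_i^m - P(i/m)| ≤ C/m for all m ≥ n. -/
/-- The Bernstein basis polynomial `B_i^m(t) = C(m,i) t^i (1-t)^(m-i)`. -/
noncomputable def bern (m i : ℕ) (t : ℝ) : ℝ :=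
  (m.choose i : ℝ) * t ^ i * (1 - t) ^ (m - i)

/-!
Expanding `X ^ k` in the Bernstein basis of degree `m ≥ k` gives
`X ^ k = ∑ i, (C(i,k) / C(m,k)) B_i^m`, so `P = ∑ k, a_k X ^ k` has
`b_i^m = ∑ k, a_k C(i,k) / C(m,k)`; these coefficients are unique because the `m + 1` Bernstein
polynomials span the `(m + 1)`-dimensional space of polynomials of degree `≤ m`. Since
`C(i,k) / C(m,k) = ∏_{j<k} (i - j) / (m - j)` is a product of `k` factors in `[0, 1]`, each within
`j / m` of `i / m`, it differs from `(i / m) ^ k` by at most `k ^ 2 / m`.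
-/

open Polynomial Finset

theorem eval_bernsteinPolynomial (m i : ℕ) (t : ℝ) :
    (bernsteinPolynomial ℝ m i).eval t = bern m i t := by
  simp [bernsteinPolynomial, bern]

section CommRing

variable (R : Type*) [CommRing R]

theorem choose_mul_bernsteinPolynomial_add (m k j : ℕ) :
    ((k + j).choose k : R[X]) * bernsteinPolynomial R m (k + j) =
      (m.choose k : R[X]) * X ^ k * bernsteinPolynomial R (m - k) j := by
  have hchoose : (m.choose (k + j) * (k + j).choose k : R[X]) = m.choose k * (m - k).choose j := by
    have := Nat.choose_mul (n := m) (Nat.le_add_right k j)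
    simp only [add_tsub_cancel_left] at this
    exact_mod_cast congrArg (Nat.cast : ℕ → R[X]) this
  rw [bernsteinPolynomial, bernsteinPolynomial, ← Nat.sub_sub, pow_add]
  linear_combination (X ^ k * X ^ j * (1 - X) ^ (m - k - j) : R[X]) * hchoose

theorem sum_choose_mul_bernsteinPolynomial {m k : ℕ} (hk : k ≤ m) :
    ∑ i ∈ range (m + 1), (i.choose k : R[X]) * bernsteinPolynomial R m i =
      (m.choose k : R[X]) * X ^ k := by
  rw [show m + 1 = k + (m - k + 1) by omega, sum_range_add,
    sum_eq_zero fun i hi => by simp [Nat.choose_eq_zero_of_lt (mem_range.1 hi)], zero_add,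
    sum_congr rfl fun j _ => choose_mul_bernsteinPolynomial_add R m k j,
    ← mul_sum, bernsteinPolynomial.sum, mul_one]

end CommRing

-- The degree-elevated control point `b_i^m` of `P`.
noncomputable def bernsteinCoeff {K : Type*} [Field K] (P : K[X]) (m i : ℕ) : K :=
  ∑ k ∈ P.support, P.coeff k * ((i.choose k : K) / m.choose k)

section CharZero

variable {K : Type*} [Field K] [CharZero K]

theorem X_pow_eq_sum_bernsteinPolynomial {m k : ℕ} (hk : k ≤ m) :
    (X ^ k : K[X]) =
      ∑ i ∈ range (m + 1), ((i.choose k : K) / m.choose k) • bernsteinPolynomial K m i := by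
  have hne : (m.choose k : K) ≠ 0 := by exact_mod_cast (Nat.choose_pos hk).ne'
  have hsum := sum_choose_mul_bernsteinPolynomial K hk
  simp only [← C_eq_natCast, ← smul_eq_C_mul] at hsum
  rw [← inv_smul_smul₀ hne (X ^ k), ← hsum, smul_sum]
  simp only [smul_smul, div_eq_inv_mul]

theorem degreeLT_le_span_bernsteinPolynomial (m : ℕ) :
    degreeLT K (m + 1) ≤
      Submodule.span K (Set.range fun i : Fin (m + 1) => bernsteinPolynomial K m i) := by
  classical
  rw [degreeLT_eq_span_X_pow, Submodule.span_le, coe_image, Set.image_subset_iff]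
  intro k hk
  have hkm : k ≤ m := Nat.lt_succ_iff.mp (mem_range.mp hk)
  rw [Set.mem_preimage, X_pow_eq_sum_bernsteinPolynomial hkm, sum_range]
  exact Submodule.sum_mem _ fun i _ => Submodule.smul_mem _ _ (Submodule.subset_span ⟨i, rfl⟩)

theorem linearIndependent_bernsteinPolynomial (m : ℕ) :
    LinearIndependent K fun i : Fin (m + 1) => bernsteinPolynomial K m i := by
  have := FiniteDimensional.span_of_finite K
    (Set.finite_range fun i : Fin (m + 1) => bernsteinPolynomial K m i)
  rw [linearIndependent_iff_card_le_finrank_span, Set.finrank]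
  calc Fintype.card (Fin (m + 1)) = Module.finrank K (degreeLT K (m + 1)) := by
        simp [(degreeLTEquiv K (m + 1)).finrank_eq]
    _ ≤ _ := Submodule.finrank_mono (degreeLT_le_span_bernsteinPolynomial m)

theorem eq_of_sum_smul_bernsteinPolynomial_eq {m : ℕ} {c d : ℕ → K}
    (h : ∑ i ∈ range (m + 1), c i • bernsteinPolynomial K m i =
      ∑ i ∈ range (m + 1), d i • bernsteinPolynomial K m i) {i : ℕ} (hi : i ≤ m) : c i = d i := by
  have hzero : ∑ j : Fin (m + 1), (c j - d j) • bernsteinPolynomial K m j = 0 := by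
    rw [← sum_range fun j => (c j - d j) • bernsteinPolynomial K m j]
    simpa only [sub_smul, sum_sub_distrib, sub_eq_zero] using h
  exact sub_eq_zero.mp <| Fintype.linearIndependent_iff.mp (linearIndependent_bernsteinPolynomial m)
    _ hzero ⟨i, Nat.lt_succ_of_le hi⟩

theorem sum_bernsteinCoeff_smul_bernsteinPolynomial {P : K[X]} {m : ℕ} (hP : P.natDegree ≤ m) :
    ∑ i ∈ range (m + 1), bernsteinCoeff P m i • bernsteinPolynomial K m i = P := by
  calc ∑ i ∈ range (m + 1), bernsteinCoeff P m i • bernsteinPolynomial K m i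
      = ∑ k ∈ P.support, P.coeff k •
          ∑ i ∈ range (m + 1), ((i.choose k : K) / m.choose k) • bernsteinPolynomial K m i := by
        simp only [bernsteinCoeff, sum_smul, smul_sum, mul_smul]
        exact sum_comm
    _ = ∑ k ∈ P.support, P.coeff k • X ^ k := sum_congr rfl fun k hk => by
        rw [X_pow_eq_sum_bernsteinPolynomial ((le_natDegree_of_mem_supp k hk).trans hP)]
    _ = P := by
        simp only [← C_mul']
        exact P.as_sum_support_C_mul_X_pow.symm

-- For `i < k` both sides vanish: the factor `j = i` is `0` by truncated subtraction.
theorem choose_div_choose_eq_prod (i m k : ℕ) :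
    (i.choose k : K) / m.choose k = ∏ j ∈ range k, ((i - j : ℕ) : K) / ((m - j : ℕ) : K) := by
  have hfac : (k.factorial : K) ≠ 0 := by exact_mod_cast k.factorial_ne_zero
  rw [prod_div_distrib, ← mul_div_mul_left _ _ hfac]
  simp only [← Nat.cast_mul, ← Nat.descFactorial_eq_factorial_mul_choose,
    Nat.descFactorial_eq_prod_range, Nat.cast_prod]

end CharZero

theorem abs_prod_sub_prod_le {K ι : Type*} [CommRing K] [LinearOrder K] [IsStrictOrderedRing K]
    (s : Finset ι) {a c : ι → K}
    (ha : ∀ j ∈ s, |a j| ≤ 1) (hc : ∀ j ∈ s, |c j| ≤ 1) :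
    |∏ j ∈ s, a j - ∏ j ∈ s, c j| ≤ ∑ j ∈ s, |a j - c j| := by
  classical
  induction s using Finset.induction_on with
  | empty => simp
  | insert i s hi ih =>
    simp only [forall_mem_insert] at ha hc
    have hprod : |∏ j ∈ s, c j| ≤ 1 := by
      rw [abs_prod]; exact prod_le_one (fun _ _ => abs_nonneg _) hc.2
    rw [prod_insert hi, prod_insert hi, sum_insert hi]
    calc |a i * ∏ j ∈ s, a j - c i * ∏ j ∈ s, c j|
        = |a i * (∏ j ∈ s, a j - ∏ j ∈ s, c j) + (a i - c i) * ∏ j ∈ s, c j| := by ring_nf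
      _ ≤ |a i| * |∏ j ∈ s, a j - ∏ j ∈ s, c j| + |a i - c i| * |∏ j ∈ s, c j| := by
        rw [← abs_mul, ← abs_mul]; exact abs_add_le _ _
      _ ≤ 1 * ∑ j ∈ s, |a j - c j| + |a i - c i| * 1 := by
        gcongr
        exacts [ha.1, ih ha.2 hc.2]
      _ = |a i - c i| + ∑ j ∈ s, |a j - c j| := by ring

section Ordered

variable {K : Type*} [Field K] [LinearOrder K] [IsStrictOrderedRing K]

theorem abs_sub_div_sub_sub_div_le {i m j : ℕ} (him : i ≤ m) (hjm : j < m) :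
    |((i - j : ℕ) : K) / ((m - j : ℕ) : K) - i / m| ≤ j / m := by
  have hm : (0 : K) < m := by exact_mod_cast (Nat.zero_le j).trans_lt hjm
  rcases le_or_gt j i with hji | hij
  · have hmj : (0 : K) < m - j := by rw [sub_pos]; exact_mod_cast hjm
    have hjiK : (j : K) ≤ i := by exact_mod_cast hji
    have himK : (i : K) ≤ m := by exact_mod_cast him
    rw [Nat.cast_sub hji, Nat.cast_sub hjm.le, abs_le]
    have hjm0 : (0 : K) ≤ j * m := by positivity
    constructor
    · rw [← neg_div, div_sub_div _ _ hmj.ne' hm.ne', div_le_div_iff₀ hm (by positivity)]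
      nlinarith [mul_nonneg hjm0 (sub_nonneg.mpr hjiK)]
    · rw [div_sub_div _ _ hmj.ne' hm.ne', div_le_div_iff₀ (by positivity) hm]
      nlinarith [mul_nonneg hjm0 (sub_nonneg.mpr himK), mul_nonneg hjm0 hmj.le]
  · rw [Nat.sub_eq_zero_of_le hij.le, Nat.cast_zero, zero_div, zero_sub, abs_neg,
      abs_of_nonneg (by positivity)]
    gcongr

theorem abs_choose_div_choose_sub_pow_le {i m k : ℕ} (him : i ≤ m) (hkm : k ≤ m) :
    |(i.choose k : K) / m.choose k - ((i : K) / m) ^ k| ≤ k ^ 2 / m := by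
  have hx : |(i : K) / m| ≤ 1 := by
    rw [abs_of_nonneg (by positivity)]
    exact div_le_one_of_le₀ (by exact_mod_cast him) (by positivity)
  have hfactor : ∀ j ∈ range k, |((i - j : ℕ) : K) / ((m - j : ℕ) : K)| ≤ 1 := fun j _ => by
    rw [abs_of_nonneg (by positivity)]
    exact div_le_one_of_le₀ (by exact_mod_cast Nat.sub_le_sub_right him j) (by positivity)
  rw [choose_div_choose_eq_prod, pow_eq_prod_const]
  calc |∏ j ∈ range k, ((i - j : ℕ) : K) / ((m - j : ℕ) : K) - ∏ _j ∈ range k, (i : K) / m|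
      ≤ ∑ j ∈ range k, |((i - j : ℕ) : K) / ((m - j : ℕ) : K) - i / m| :=
        abs_prod_sub_prod_le _ hfactor fun _ _ => hx
    _ ≤ ∑ _j ∈ range k, (k : K) / m := sum_le_sum fun j hj => by
        have hjk : j < k := mem_range.mp hj
        exact (abs_sub_div_sub_sub_div_le him (hjk.trans_le hkm)).trans (by gcongr)
    _ = k ^ 2 / m := by rw [sum_const, card_range, nsmul_eq_mul]; ring

theorem abs_bernsteinCoeff_sub_eval_le {P : K[X]} {m i : ℕ} (hP : P.natDegree ≤ m)
    (him : i ≤ m) :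
    |bernsteinCoeff P m i - P.eval ((i : K) / m)| ≤
      (∑ k ∈ P.support, |P.coeff k| * k ^ 2) / m := by
  rw [eval_eq_sum, Polynomial.sum, bernsteinCoeff, ← sum_sub_distrib, sum_div]
  refine (abs_sum_le_sum_abs _ _).trans (sum_le_sum fun k hk => ?_)
  rw [← mul_sub, abs_mul, mul_div_assoc]
  exact mul_le_mul_of_nonneg_left
    (abs_choose_div_choose_sub_pow_le him ((le_natDegree_of_mem_supp k hk).trans hP)) (abs_nonneg _)

end Ordered

theorem bernstein_coeff_convergence (n : ℕ) (P : Polynomial ℝ) (hP : P.natDegree ≤ n)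
    (b : ℕ → ℕ → ℝ)
    (hb : ∀ m, n ≤ m → ∀ t : ℝ,
      P.eval t = ∑ i ∈ Finset.range (m + 1), b m i * bern m i t) :
    ∃ C : ℝ, ∀ m, n ≤ m → ∀ i ≤ m, |b m i - P.eval ((i : ℝ) / m)| ≤ C / m := by
  refine ⟨∑ k ∈ P.support, |P.coeff k| * k ^ 2, fun m hm i him => ?_⟩
  have hPm : P.natDegree ≤ m := hP.trans hm
  have hbP : ∑ i ∈ range (m + 1), b m i • bernsteinPolynomial ℝ m i = P :=
    Polynomial.funext fun t => by
      simp only [eval_finsetSum, eval_smul, eval_bernsteinPolynomial, smul_eq_mul, hb m hm t]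
  have hb_eq : b m i = bernsteinCoeff P m i := eq_of_sum_smul_bernsteinPolynomial_eq
    (hbP.trans (sum_bernsteinCoeff_smul_bernsteinPolynomial hPm).symm) him
  rw [hb_eq]
  exact abs_bernsteinCoeff_sub_eval_le hPm him
end
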